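/- arXiv:1801.07405 — 3 statements merged into one kernel-verified Lean document; each statement's English description precedes it below -/
import Mathlib

section
/- Let n be a positive integer and let S be a nonempty subset of ℝ^n (functions Fin n → ℝ) that is tropically convex, i.e. for all x, y ∈ S and all a, b ∈ ℝ the point (fun i => max (a + x i) (b + y i)) belongs to S. Then S, equipped with the subspace topology from ℝ^n, is a contractible topological space. -/
/-- Every nonempty tropically convex subset of `ℝ^n` is contractible. -/
theorem tropically_convex_contractible (n : ℕ) (hn : 0 < n)
    (S : Set (Fin n → ℝ)) (hS : S.Nonempty)
    (htc : ∀ x ∈ S, ∀ y ∈ S, ∀ a b : ℝ,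
      (fun i => max (a + x i) (b + y i)) ∈ S) :
    ContractibleSpace S := by
  obtain ⟨p, hp⟩ := hS
  have hne : (Finset.univ : Finset (Fin n)).Nonempty := by
    simpa [Finset.univ_nonempty_iff] using Fin.pos_iff_nonempty.mp hn
  set M : (Fin n → ℝ) → ℝ := fun x => Finset.univ.sup' hne (fun i => x i - p i) with hM
  set m : (Fin n → ℝ) → ℝ := fun x => Finset.univ.inf' hne (fun i => x i - p i) with hm
  have hMc : Continuous M :=
    Continuous.finset_sup'_apply hne fun i _ => (continuous_apply i).sub continuous_const
  have hmc : Continuous m :=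
    Continuous.finset_inf'_apply hne fun i _ => (continuous_apply i).sub continuous_const
  rw [contractible_iff_id_nullhomotopic]
  refine ⟨⟨p, hp⟩, ⟨?_⟩⟩
  refine
    { toFun := fun z =>
        ⟨fun i => max (-((z.1 : ℝ) * M (z.2 : Fin n → ℝ)) + (z.2 : Fin n → ℝ) i)
          ((1 - (z.1 : ℝ)) * m (z.2 : Fin n → ℝ) + p i),
          htc _ z.2.2 p hp _ _⟩
      continuous_toFun := ?_
      map_zero_left := ?_
      map_one_left := ?_ }
  · refine Continuous.subtype_mk (continuous_pi fun i => ?_) _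
    have ht : Continuous fun z : unitInterval × S => (z.1 : ℝ) :=
      continuous_subtype_val.comp continuous_fst
    have hx : Continuous fun z : unitInterval × S => (z.2 : Fin n → ℝ) :=
      continuous_subtype_val.comp continuous_snd
    exact ((ht.mul (hMc.comp hx)).neg.add ((continuous_apply i).comp hx)).max
      ((continuous_const.sub ht).mul (hmc.comp hx) |>.add continuous_const)
  · intro x
    ext i
    simp only [ContinuousMap.coe_mk, Set.Icc.coe_zero, zero_mul, neg_zero, zero_add,
      sub_zero, one_mul]
    have h1 : m (x : Fin n → ℝ) + p i ≤ (x : Fin n → ℝ) i := by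
      have := Finset.inf'_le (fun i => (x : Fin n → ℝ) i - p i) (Finset.mem_univ i)
      linarith
    simpa [ContinuousMap.id_apply] using max_eq_left h1
  · intro x
    ext i
    simp only [ContinuousMap.coe_mk, Set.Icc.coe_one, one_mul, sub_self, zero_mul, zero_add]
    have h1 : -M (x : Fin n → ℝ) + (x : Fin n → ℝ) i ≤ p i := by
      have := Finset.le_sup' (fun i => (x : Fin n → ℝ) i - p i) (Finset.mem_univ i)
      linarith
    simpa using max_eq_right h1
end

section
/- Let n and m be positive integers and let v : Fin m → (Fin n → ℝ) be a finite family of points of ℝ^n. Define H := { w : Fin n → ℝ | ∃ a : Fin m → ℝ, ∀ i, w i = max over k ∈ Fin m of (a k + v k i) }. Then: (1) H contains every point v k; (2) H is tropically convex, i.e. for all x, y ∈ H and a, b ∈ ℝ the point (fun i => max (a + x i) (b + y i)) lies in H; and (3) H is contained in every tropically convex subset of ℝ^n containing all the points v k. Consequently H is the tropical convex hull of {v k : k ∈ Fin m}, the smallest tropically convex set containing this family. -/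
lemma sup'_const_add {α : Type*} (s : Finset α) (hs : s.Nonempty) (c : ℝ) (f : α → ℝ) :
    s.sup' hs (fun k => c + f k) = c + s.sup' hs f := by
  exact (Finset.comp_sup'_eq_sup'_comp hs (fun x => c + x)
    (fun x y => (max_add_add_left c x y).symm)).symm

lemma sup'_max {α : Type*} (s : Finset α) (hs : s.Nonempty) (f g : α → ℝ) :
    s.sup' hs (fun k => max (f k) (g k)) = max (s.sup' hs f) (s.sup' hs g) := by
  apply le_antisymm
  · exact Finset.sup'_le _ _ fun k hk =>
      max_le_max (Finset.le_sup' f hk) (Finset.le_sup' g hk)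
  · exact max_le
      (Finset.sup'_le _ _ fun k hk =>
        le_trans (le_max_left (f k) (g k)) (Finset.le_sup' (fun k => max (f k) (g k)) hk))
      (Finset.sup'_le _ _ fun k hk =>
        le_trans (le_max_right (f k) (g k)) (Finset.le_sup' (fun k => max (f k) (g k)) hk))

/-- The set of tropical combinations of a finite family `v : Fin m → (Fin n → ℝ)`
contains each `v k`, is tropically convex, and is contained in every tropically
convex set containing all the `v k`; i.e. it is the tropical convex hull. -/
theorem tropical_convex_hull_spec (n m : ℕ) (hn : 0 < n) (hm : 0 < m)
    (v : Fin m → Fin n → ℝ) (H : Set (Fin n → ℝ))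
    (hH : H = {w : Fin n → ℝ | ∃ a : Fin m → ℝ, ∀ i : Fin n,
      w i = Finset.univ.sup'
        (Finset.univ_nonempty_iff.mpr (Fin.pos_iff_nonempty.mp hm))
        (fun k => a k + v k i)}) :
    (∀ k : Fin m, v k ∈ H) ∧
    (∀ x ∈ H, ∀ y ∈ H, ∀ a b : ℝ,
      (fun i => max (a + x i) (b + y i)) ∈ H) ∧
    (∀ S : Set (Fin n → ℝ),
      (∀ x ∈ S, ∀ y ∈ S, ∀ a b : ℝ,
        (fun i => max (a + x i) (b + y i)) ∈ S) →
      (∀ k : Fin m, v k ∈ S) → H ⊆ S) := by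
  subst hH
  have hnn : (Finset.univ : Finset (Fin n)).Nonempty :=
    Finset.univ_nonempty_iff.mpr (Fin.pos_iff_nonempty.mp hn)
  have hmn : (Finset.univ : Finset (Fin m)).Nonempty :=
    Finset.univ_nonempty_iff.mpr (Fin.pos_iff_nonempty.mp hm)
  refine ⟨?_, ?_, ?_⟩
  · intro k
    refine ⟨fun j => -(Finset.univ.sup' hnn (fun i => v j i - v k i)), fun i => ?_⟩
    have hkz : Finset.univ.sup' hnn (fun i' => v k i' - v k i') = 0 := by
      rw [Finset.sup'_congr hnn rfl (fun i' _ => sub_self (v k i')), Finset.sup'_const]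
    apply le_antisymm
    · refine le_trans ?_ (Finset.le_sup'
        (fun j => -(Finset.univ.sup' hnn (fun i' => v j i' - v k i')) + v j i)
        (Finset.mem_univ k))
      simp [hkz]
    · apply Finset.sup'_le
      intro j _
      have : v j i - v k i ≤ Finset.univ.sup' hnn (fun i' => v j i' - v k i') :=
        Finset.le_sup' (fun i' => v j i' - v k i') (Finset.mem_univ i)
      show -(Finset.univ.sup' hnn fun i' => v j i' - v k i') + v j i ≤ v k i
      linarith
  · rintro x ⟨c, hc⟩ y ⟨d, hd⟩ a b
    refine ⟨fun k => max (a + c k) (b + d k), fun i => ?_⟩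
    simp only [hc, hd]
    rw [← sup'_const_add _ hmn a, ← sup'_const_add _ hmn b, ← sup'_max]
    congr 1
    ext k
    rw [← max_add_add_right]
    congr 1 <;> ring
  · intro S hS hv
    rintro w ⟨a, hw⟩
    have key : ∀ (s : Finset (Fin m)) (hs : s.Nonempty),
        (fun i => s.sup' hs (fun k => a k + v k i)) ∈ S := by
      intro s hs
      induction hs using Finset.Nonempty.cons_induction with
      | singleton k =>
        have := hS _ (hv k) _ (hv k) (a k) (a k)
        simpa using this
      | cons k s h hs ih =>
        have := hS _ (hv k) _ ih (a k) 0
        simp only [zero_add] at this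
        convert this using 2 with i
        rw [Finset.sup'_cons]
    have := key Finset.univ hmn
    convert this using 2 with i
    exact hw i
end

section
/- Let X be a type, n a natural number, f : Fin (n+1) → X → ℝ, and x, y, z : X. Assume: (a) for every w : X, the maximum over i ∈ Fin (n+1) of (f i w − f i x) equals 0; (b) for all indices i ≤ j in Fin (n+1), f i z − f i y ≤ f j z − f j y; and (c) for all indices i ≤ j in Fin (n+1), f i x − f i z ≤ f j x − f j z. Set c := f n z − f n y and define b : Fin (n+1) → ℝ by b i := max (−(f i y)) (c − f i x). Then b 0 = c − f 0 x, b n = −(f n y), and consequently b 0 − b n = f n z − f 0 z. -/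
/-- Coefficient computation of Lemma 3.2: with `c = f_n(z) - f_n(y)` and
`b i = max (-(f i y)) (c - f i x)`, the extreme coefficients are
`b 0 = c - f 0 x` and `b n = -(f n y)`, whence
`b 0 - b n = f n z - f 0 z`. -/
theorem maxplus_extreme_coefficients (X : Type*) (n : ℕ)
    (f : Fin (n + 1) → X → ℝ) (x y z : X)
    (ha : ∀ w : X,
      (Finset.univ.sup' Finset.univ_nonempty fun i => f i w - f i x) = 0)
    (hb : ∀ i j : Fin (n + 1), i ≤ j → f i z - f i y ≤ f j z - f j y)
    (hc : ∀ i j : Fin (n + 1), i ≤ j → f i x - f i z ≤ f j x - f j z)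
    (c : ℝ) (hc' : c = f (Fin.last n) z - f (Fin.last n) y)
    (b : Fin (n + 1) → ℝ)
    (hb' : ∀ i : Fin (n + 1), b i = max (-(f i y)) (c - f i x)) :
    b 0 = c - f 0 x ∧
    b (Fin.last n) = -(f (Fin.last n) y) ∧
    b 0 - b (Fin.last n) = f (Fin.last n) z - f 0 z := by
  have haz := ha z
  -- all terms ≤ 0
  have hle : ∀ i : Fin (n + 1), f i z - f i x ≤ 0 := by
    intro i
    have := Finset.le_sup' (f := fun i : Fin (n+1) => f i z - f i x) (Finset.mem_univ i)
    rw [haz] at this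
    exact this
  -- some term equals 0
  obtain ⟨i, -, hi⟩ := Finset.exists_mem_eq_sup' (Finset.univ_nonempty)
    (fun i : Fin (n + 1) => f i z - f i x)
  have hi0 : f i z - f i x = 0 := by rw [← hi, haz]
  -- f 0 x ≤ f 0 z via hc with 0 ≤ i
  have h0 : f 0 x - f 0 z ≤ 0 := by
    have := hc 0 i (Fin.zero_le i)
    linarith
  have h0' : f 0 z - f 0 x ≤ 0 := hle 0
  have h0eq : f 0 x = f 0 z := by linarith
  have hlast : f (Fin.last n) z - f (Fin.last n) x ≤ 0 := hle (Fin.last n)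
  have hb0last := hb 0 (Fin.last n) (Fin.le_last 0)
  have hB0 : b 0 = c - f 0 x := by
    rw [hb' 0, max_eq_right]
    rw [hc']
    linarith
  have hBn : b (Fin.last n) = -(f (Fin.last n) y) := by
    rw [hb' (Fin.last n), max_eq_left]
    rw [hc']
    linarith
  refine ⟨hB0, hBn, ?_⟩
  rw [hB0, hBn, hc']
  linarith
end
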